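/- Let u(x₁, x₂) = x₂² + 2x₂|x₁| on ℝ² and let a(x) be the matrix with entries a₁₁ = 1, a₁₂ = a₂₁ = −sign(x₁), a₂₂ = 2. Then: (1) a is measurable, symmetric and uniformly elliptic, i.e. there is ν > 0 with ν|ξ|² ≤ a_{ij}(x)ξ_iξ_j ≤ ν⁻¹|ξ|² for all x, ξ ∈ ℝ²; (2) u is a weak solution of the divergence-form equation −D_i(a_{ij}D_ju) = 0 in ℝ², i.e. ∫_{ℝ²} a_{ij}(x) D_ju(x) D_iφ(x) dx = 0 for every smooth compactly supported φ : ℝ² → ℝ; (3) u > 0 in the open upper half-plane {x₂ > 0}, u(0,0) = 0, and D₂u(0,0) = 0. Hence the Hopf–Oleinik lemma fails for divergence-form equations with bounded measurable coefficients. -/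

import Mathlib

open MeasureTheory Real Set Filter
open scoped Topology

noncomputable section

/-- The counterexample `u(x₁,x₂) = x₂² + 2x₂|x₁|`. -/
def uDiv (x : ℝ × ℝ) : ℝ := x.2 ^ 2 + 2 * x.2 * |x.1|

/-- First component of the weak gradient of `uDiv`. -/
def g1Div (x : ℝ × ℝ) : ℝ := 2 * x.2 * Real.sign x.1

/-- Second component of the weak gradient of `uDiv`. -/
def g2Div (x : ℝ × ℝ) : ℝ := 2 * x.2 + 2 * |x.1|

/-- The off-diagonal coefficient `a₁₂ = a₂₁ = -sign x₁` (with `a₁₁ = 1`, `a₂₂ = 2`). -/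
def a12Div (x : ℝ × ℝ) : ℝ := -Real.sign x.1

lemma measurable_realSign : Measurable Real.sign := by
  have h : Real.sign = fun r : ℝ => if r < 0 then (-1 : ℝ) else if 0 < r then 1 else 0 := by
    funext r; rfl
  rw [h]
  exact Measurable.ite (measurableSet_lt measurable_id measurable_const) measurable_const
    (Measurable.ite (measurableSet_lt measurable_const measurable_id) measurable_const
      measurable_const)

lemma abs_realSign (t : ℝ) : |Real.sign t| ≤ 1 := by
  rcases lt_trichotomy t 0 with h|h|h
  · simp [Real.sign_of_neg h]
  · simp [h, Real.sign_zero]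
  · simp [Real.sign_of_pos h]

lemma cast_signType_eq (t : ℝ) : ((SignType.sign t : SignType) : ℝ) = Real.sign t := by
  rcases lt_trichotomy t 0 with h|h|h
  · simp [sign_neg h, Real.sign_of_neg h]
  · simp [h, Real.sign_zero]
  · simp [sign_pos h, Real.sign_of_pos h]

lemma integrable_comp_neg' {f : ℝ → ℝ} (hf : Integrable f) : Integrable fun t => f (-t) := by
  have A : MeasurableEmbedding fun x : ℝ => -x :=
    (Homeomorph.neg ℝ).isClosedEmbedding.measurableEmbedding
  have h : Integrable f ((volume : Measure ℝ).map fun x => -x) := by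
    rwa [Measure.map_neg_eq_self (volume : Measure ℝ)]
  exact A.integrable_map_iff.1 h

lemma abs_big {M t : ℝ} (hM : 0 ≤ M) (ht : t ∉ Icc (-M) M) : M < |t| := by
  simp only [mem_Icc, not_and_or, not_le] at ht
  rcases ht with h|h
  · rw [abs_of_neg (by linarith)]; linarith
  · rw [abs_of_pos (by linarith)]; exact h

/-- 1D integration by parts for a function differentiable away from `0`. -/
lemma parts1D (f g φ φ' : ℝ → ℝ)
    (hf : Continuous f)
    (hd : ∀ t : ℝ, t ≠ 0 → HasDerivAt f (g t) t)
    (hφc : Continuous φ)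
    (hφd : ∀ t, HasDerivAt φ (φ' t) t)
    (htop : ∀ᶠ t in atTop, φ t = 0)
    (hbot : ∀ᶠ t in atBot, φ t = 0)
    (hi1 : Integrable (fun t => f t * φ' t))
    (hi2 : Integrable (fun t => g t * φ t)) :
    ∫ t, f t * φ' t = -∫ t, g t * φ t := by
  set F : ℝ → ℝ := fun t => f t * φ t with hFdef
  set F' : ℝ → ℝ := fun t => g t * φ t + f t * φ' t with hF'def
  have hFc : Continuous F := hf.mul hφc
  have hFd : ∀ t : ℝ, t ≠ 0 → HasDerivAt F (F' t) t := fun t ht => (hd t ht).mul (hφd t)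
  have hFi : Integrable F' := hi2.add hi1
  have hTop : Tendsto F atTop (𝓝 0) := by
    apply Tendsto.congr' _ (tendsto_const_nhds (x := (0:ℝ)))
    filter_upwards [htop] with t ht
    simp [hFdef, ht]
  have hBot : Tendsto F atBot (𝓝 0) := by
    apply Tendsto.congr' _ (tendsto_const_nhds (x := (0:ℝ)))
    filter_upwards [hbot] with t ht
    simp [hFdef, ht]
  have h1 : ∫ t in Ioi (0:ℝ), F' t = 0 - F 0 :=
    integral_Ioi_of_hasDerivAt_of_tendsto hFc.continuousWithinAt
      (fun x hx => hFd x (ne_of_gt hx)) hFi.integrableOn hTop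
  have h2 : ∫ t in Iic (0:ℝ), F' t = F 0 := by
    have hGd : ∀ x ∈ Ioi (0:ℝ), HasDerivAt (fun t => F (-t)) (-F' (-x)) x := by
      intro x hx
      have hx' : (-x : ℝ) ≠ 0 := neg_ne_zero.mpr (ne_of_gt hx)
      have h := (hFd (-x) hx').comp x (hasDerivAt_neg x)
      simpa [Function.comp_def, mul_comm] using h
    have hGc : ContinuousWithinAt (fun t => F (-t)) (Ici (0:ℝ)) 0 :=
      (hFc.comp continuous_neg).continuousWithinAt
    have hGtop : Tendsto (fun t => F (-t)) atTop (𝓝 0) := hBot.comp tendsto_neg_atTop_atBot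
    have hGi : IntegrableOn (fun x => -F' (-x)) (Ioi (0:ℝ)) :=
      ((integrable_comp_neg' hFi).neg).integrableOn
    have hIoi := integral_Ioi_of_hasDerivAt_of_tendsto hGc hGd hGi hGtop
    -- hIoi : ∫ x in Ioi 0, -F' (-x) = 0 - F (-0)
    rw [integral_neg] at hIoi
    have heq : ∫ x in Ioi (0:ℝ), F' (-x) = ∫ x in Iic (-(0:ℝ)), F' x :=
      integral_comp_neg_Ioi 0 F'
    rw [neg_zero] at heq
    rw [← heq]
    have : ∫ x in Ioi (0:ℝ), F' (-x) = -(0 - F (-0)) := by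
      rw [← hIoi]; ring
    rw [this]; simp
  have h3 : ∫ t, F' t = 0 := by
    have hsum := intervalIntegral.integral_Iic_add_Ioi (b := (0:ℝ)) (μ := volume)
      hFi.integrableOn hFi.integrableOn
    rw [h1, h2] at hsum
    rw [← hsum]; ring
  have h4 := integral_add hi2 hi1
  rw [hF'def] at h3
  rw [h3] at h4
  linarith [h4]

/-- `u(x₁,x₂) = x₂² + 2x₂|x₁|` is a weak solution of the divergence-form
equation `-D_i(a_{ij} D_j u) = 0` in `ℝ²` with the bounded measurable uniformly elliptic
symmetric matrix `a₁₁ = 1`, `a₁₂ = a₂₁ = -sign x₁`, `a₂₂ = 2`; it is positive in the upper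
half-plane, vanishes at the origin, and `D₂u(0,0) = 0`: the Hopf–Oleinik lemma fails for
divergence-type equations. -/
theorem statement9 :
    Measurable a12Div ∧
    (∃ ν : ℝ, 0 < ν ∧ ∀ x ξ : ℝ × ℝ,
      ν * (ξ.1 ^ 2 + ξ.2 ^ 2) ≤
          1 * ξ.1 ^ 2 + 2 * a12Div x * ξ.1 * ξ.2 + 2 * ξ.2 ^ 2 ∧
        1 * ξ.1 ^ 2 + 2 * a12Div x * ξ.1 * ξ.2 + 2 * ξ.2 ^ 2 ≤
          ν⁻¹ * (ξ.1 ^ 2 + ξ.2 ^ 2)) ∧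
    (∀ φ : ℝ × ℝ → ℝ, ContDiff ℝ (⊤ : ℕ∞) φ → HasCompactSupport φ →
      (∫ x : ℝ × ℝ, uDiv x * fderiv ℝ φ x (1, 0)) = -(∫ x : ℝ × ℝ, g1Div x * φ x) ∧
      (∫ x : ℝ × ℝ, uDiv x * fderiv ℝ φ x (0, 1)) = -(∫ x : ℝ × ℝ, g2Div x * φ x) ∧
      (∫ x : ℝ × ℝ,
        ((1 * g1Div x + a12Div x * g2Div x) * fderiv ℝ φ x (1, 0) +
          (a12Div x * g1Div x + 2 * g2Div x) * fderiv ℝ φ x (0, 1))) = 0) ∧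
    (∀ x : ℝ × ℝ, 0 < x.2 → 0 < uDiv x) ∧
    uDiv (0, 0) = 0 ∧
    HasDerivAt (fun t : ℝ => uDiv (0, t)) 0 0 := by
  refine ⟨?_, ?_, ?_, ?_, ?_, ?_⟩
  · -- measurability
    exact ((measurable_realSign.comp measurable_fst).neg : Measurable fun x : ℝ × ℝ => -Real.sign x.1)
  · -- ellipticity
    refine ⟨1/4, by norm_num, fun x ξ => ?_⟩
    have hs : |a12Div x| ≤ 1 := by
      unfold a12Div; rw [abs_neg]; exact abs_realSign _
    have hs2 : a12Div x ^ 2 ≤ 1 := by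
      have := abs_nonneg (a12Div x)
      nlinarith [sq_abs (a12Div x)]
    constructor
    · nlinarith [sq_nonneg (3 * ξ.1 + 4 * a12Div x * ξ.2), sq_nonneg ξ.1, sq_nonneg ξ.2]
    · rw [show ((1/4:ℝ))⁻¹ = 4 by norm_num]
      nlinarith [sq_nonneg (ξ.1 - a12Div x * ξ.2), sq_nonneg ξ.1, sq_nonneg ξ.2]
  · -- weak solution
    intro φ hφ hsupp
    have hφcont : Continuous φ := hφ.continuous
    have hφdiff : ∀ p : ℝ × ℝ, HasFDerivAt φ (fderiv ℝ φ p) p :=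
      fun p => (hφ.differentiable (by simp) p).hasFDerivAt
    have hd1cont : Continuous (fun p : ℝ × ℝ => fderiv ℝ φ p (1, 0)) :=
      (hφ.continuous_fderiv_apply (by simp)).comp (continuous_id.prodMk continuous_const)
    have hd2cont : Continuous (fun p : ℝ × ℝ => fderiv ℝ φ p (0, 1)) :=
      (hφ.continuous_fderiv_apply (by simp)).comp (continuous_id.prodMk continuous_const)
    obtain ⟨R, hR⟩ := hsupp.isCompact.isBounded.subset_closedBall 0
    have hvanφ : ∀ p : ℝ × ℝ, R < ‖p‖ → φ p = 0 := by
      intro p hp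
      apply image_eq_zero_of_notMem_tsupport
      intro hmem
      exact absurd (hR hmem) (by simpa [Metric.mem_closedBall, dist_zero_right] using not_le.2 hp)
    have hvand : ∀ p : ℝ × ℝ, R < ‖p‖ → fderiv ℝ φ p = 0 := by
      intro p hp
      by_contra h
      have hmem : p ∈ tsupport φ := support_fderiv_subset ℝ (by simpa [Function.mem_support] using h)
      exact absurd (hR hmem) (by simpa [Metric.mem_closedBall, dist_zero_right] using not_le.2 hp)
    set M : ℝ := max R 0 with hMdef
    have hM : 0 ≤ M := le_max_right R 0
    have hnorm1 : ∀ t y : ℝ, |t| ≤ ‖((t, y) : ℝ × ℝ)‖ := by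
      intro t y
      calc |t| = ‖t‖ := (Real.norm_eq_abs t).symm
        _ ≤ ‖((t, y) : ℝ × ℝ)‖ := by rw [Prod.norm_def]; exact le_max_left _ _
    have hnorm2 : ∀ t y : ℝ, |t| ≤ ‖((y, t) : ℝ × ℝ)‖ := by
      intro t y
      calc |t| = ‖t‖ := (Real.norm_eq_abs t).symm
        _ ≤ ‖((y, t) : ℝ × ℝ)‖ := by rw [Prod.norm_def]; exact le_max_right _ _
    have hbig1 : ∀ t y : ℝ, M < |t| → R < ‖((t, y) : ℝ × ℝ)‖ :=
      fun t y h => lt_of_le_of_lt (le_max_left R 0) (lt_of_lt_of_le h (hnorm1 t y))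
    have hbig2 : ∀ t y : ℝ, M < |t| → R < ‖((y, t) : ℝ × ℝ)‖ :=
      fun t y h => lt_of_le_of_lt (le_max_left R 0) (lt_of_lt_of_le h (hnorm2 t y))
    -- eventual vanishing of slices
    have hev1top : ∀ y : ℝ, ∀ᶠ t in atTop, φ (t, y) = 0 := by
      intro y
      filter_upwards [eventually_gt_atTop M] with t ht
      exact hvanφ _ (hbig1 t y (lt_of_lt_of_le ht (le_abs_self t)))
    have hev1bot : ∀ y : ℝ, ∀ᶠ t in atBot, φ (t, y) = 0 := by
      intro y
      filter_upwards [eventually_lt_atBot (-M)] with t ht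
      refine hvanφ _ (hbig1 t y ?_)
      have : M < -t := by linarith
      exact lt_of_lt_of_le this (neg_le_abs t)
    have hev2top : ∀ y : ℝ, ∀ᶠ t in atTop, φ (y, t) = 0 := by
      intro y
      filter_upwards [eventually_gt_atTop M] with t ht
      exact hvanφ _ (hbig2 t y (lt_of_lt_of_le ht (le_abs_self t)))
    have hev2bot : ∀ y : ℝ, ∀ᶠ t in atBot, φ (y, t) = 0 := by
      intro y
      filter_upwards [eventually_lt_atBot (-M)] with t ht
      refine hvanφ _ (hbig2 t y ?_)
      have : M < -t := by linarith
      exact lt_of_lt_of_le this (neg_le_abs t)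
    -- slice integrability helpers
    have hint_d1 : ∀ (y : ℝ) (h : ℝ → ℝ), Continuous h →
        Integrable (fun t => h t * fderiv ℝ φ (t, y) (1, 0)) := by
      intro y h hc
      apply Continuous.integrable_of_hasCompactSupport
      · exact hc.mul (hd1cont.comp (continuous_id.prodMk continuous_const))
      · apply HasCompactSupport.intro (isCompact_Icc (a := -M) (b := M))
        intro t ht
        rw [hvand _ (hbig1 t y (abs_big hM ht))]
        simp
    have hint_d2 : ∀ (y : ℝ) (h : ℝ → ℝ), Continuous h →
        Integrable (fun t => h t * fderiv ℝ φ (y, t) (0, 1)) := by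
      intro y h hc
      apply Continuous.integrable_of_hasCompactSupport
      · exact hc.mul (hd2cont.comp (continuous_const.prodMk continuous_id))
      · apply HasCompactSupport.intro (isCompact_Icc (a := -M) (b := M))
        intro t ht
        rw [hvand _ (hbig2 t y (abs_big hM ht))]
        simp
    have hint_φ1 : ∀ (y : ℝ) (h : ℝ → ℝ), Continuous h →
        Integrable (fun t => h t * φ (t, y)) := by
      intro y h hc
      apply Continuous.integrable_of_hasCompactSupport
      · exact hc.mul (hφcont.comp (continuous_id.prodMk continuous_const))
      · apply HasCompactSupport.intro (isCompact_Icc (a := -M) (b := M))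
        intro t ht
        rw [hvanφ _ (hbig1 t y (abs_big hM ht))]
        simp
    have hint_φ2 : ∀ (y : ℝ) (h : ℝ → ℝ), Continuous h →
        Integrable (fun t => h t * φ (y, t)) := by
      intro y h hc
      apply Continuous.integrable_of_hasCompactSupport
      · exact hc.mul (hφcont.comp (continuous_const.prodMk continuous_id))
      · apply HasCompactSupport.intro (isCompact_Icc (a := -M) (b := M))
        intro t ht
        rw [hvanφ _ (hbig2 t y (abs_big hM ht))]
        simp
    -- slice derivatives of φ
    have hline1 : ∀ y t : ℝ, HasDerivAt (fun s => φ (s, y)) (fderiv ℝ φ (t, y) (1, 0)) t := by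
      intro y t
      have h := (hφdiff (t, y)).comp_hasDerivAt t ((hasDerivAt_id t).prodMk (hasDerivAt_const t y))
      simpa [Function.comp_def] using h
    have hline2 : ∀ y t : ℝ, HasDerivAt (fun s => φ (y, s)) (fderiv ℝ φ (y, t) (0, 1)) t := by
      intro y t
      have h := (hφdiff (y, t)).comp_hasDerivAt t ((hasDerivAt_const t y).prodMk (hasDerivAt_id t))
      simpa [Function.comp_def] using h
    -- continuity of slices of φ
    have hφsl1 : ∀ y : ℝ, Continuous (fun t => φ (t, y)) :=
      fun y => hφcont.comp (continuous_id.prodMk continuous_const)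
    have hφsl2 : ∀ y : ℝ, Continuous (fun t => φ (y, t)) :=
      fun y => hφcont.comp (continuous_const.prodMk continuous_id)
    -- Fubini helpers
    have fub1 : ∀ (F : ℝ × ℝ → ℝ), Integrable F → (∫ z, F z) = ∫ y, ∫ t, F (t, y) := by
      intro F hF
      rw [Measure.volume_eq_prod] at hF ⊢
      exact integral_prod_symm F hF
    have fub2 : ∀ (F : ℝ × ℝ → ℝ), Integrable F → (∫ z, F z) = ∫ y, ∫ t, F (y, t) := by
      intro F hF
      rw [Measure.volume_eq_prod] at hF ⊢
      exact integral_prod F hF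
    -- continuity of various 2D functions
    have hucont : Continuous uDiv := by
      unfold uDiv
      exact (continuous_snd.pow 2).add ((continuous_const.mul continuous_snd).mul
        continuous_fst.abs)
    have hg2cont : Continuous g2Div := by
      unfold g2Div
      exact (continuous_const.mul continuous_snd).add (continuous_const.mul continuous_fst.abs)
    have hcs_d1 : HasCompactSupport (fun x : ℝ × ℝ => fderiv ℝ φ x (1, 0)) :=
      hsupp.fderiv_apply ℝ (1, 0)
    have hcs_d2 : HasCompactSupport (fun x : ℝ × ℝ => fderiv ℝ φ x (0, 1)) :=
      hsupp.fderiv_apply ℝ (0, 1)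
    -- 2D integrabilities
    have hIa1 : Integrable (fun x : ℝ × ℝ => uDiv x * fderiv ℝ φ x (1, 0)) :=
      (hucont.mul hd1cont).integrable_of_hasCompactSupport hcs_d1.mul_left
    have hIb1 : Integrable (fun x : ℝ × ℝ => uDiv x * fderiv ℝ φ x (0, 1)) :=
      (hucont.mul hd2cont).integrable_of_hasCompactSupport hcs_d2.mul_left
    have hI2φ : Integrable (fun x : ℝ × ℝ => (2 * x.2) * φ x) :=
      ((continuous_const.mul continuous_snd).mul hφcont).integrable_of_hasCompactSupport
        hsupp.mul_left
    have hIa2 : Integrable (fun x : ℝ × ℝ => g1Div x * φ x) := by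
      have heq : (fun x : ℝ × ℝ => g1Div x * φ x)
          = fun x => Real.sign x.1 * ((2 * x.2) * φ x) := by
        funext x; unfold g1Div; ring
      rw [heq]
      exact hI2φ.bdd_mul ((measurable_realSign.comp measurable_fst).aestronglyMeasurable)
        (c := 1) (Eventually.of_forall fun x => by simpa [Real.norm_eq_abs] using abs_realSign x.1)
    have hIb2 : Integrable (fun x : ℝ × ℝ => g2Div x * φ x) :=
      (hg2cont.mul hφcont).integrable_of_hasCompactSupport hsupp.mul_left
    have hIc1 : Integrable (fun x : ℝ × ℝ => (-2 * x.1) * fderiv ℝ φ x (1, 0)) :=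
      ((continuous_const.mul continuous_fst).mul hd1cont).integrable_of_hasCompactSupport
        hcs_d1.mul_left
    have hIc2 : Integrable (fun x : ℝ × ℝ => (2 * x.2 + 4 * |x.1|) * fderiv ℝ φ x (0, 1)) :=
      (((continuous_const.mul continuous_snd).add
        (continuous_const.mul continuous_fst.abs)).mul hd2cont).integrable_of_hasCompactSupport
        hcs_d2.mul_left
    have hIφm2 : Integrable (fun x : ℝ × ℝ => (-2 : ℝ) * φ x) :=
      (continuous_const.mul hφcont).integrable_of_hasCompactSupport hsupp.mul_left
    have hIφ2 : Integrable (fun x : ℝ × ℝ => (2 : ℝ) * φ x) :=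
      (continuous_const.mul hφcont).integrable_of_hasCompactSupport hsupp.mul_left
    -- key slice identities
    have key_a : ∀ y : ℝ, (∫ t, uDiv (t, y) * fderiv ℝ φ (t, y) (1, 0))
        = -∫ t, g1Div (t, y) * φ (t, y) := by
      intro y
      have : ∀ t : ℝ, uDiv (t, y) = y ^ 2 + 2 * y * |t| := fun t => rfl
      simp only [uDiv, g1Div]
      refine parts1D (fun t => y ^ 2 + 2 * y * |t|) (fun t => 2 * y * Real.sign t)
        (fun t => φ (t, y)) (fun t => fderiv ℝ φ (t, y) (1, 0))
        (continuous_const.add (continuous_const.mul continuous_abs)) ?_ (hφsl1 y)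
        (hline1 y) (hev1top y) (hev1bot y)
        (hint_d1 y _ (continuous_const.add (continuous_const.mul continuous_abs))) ?_
      · intro t ht
        have h := ((hasDerivAt_abs ht).const_mul (2 * y)).const_add (y ^ 2)
        rw [cast_signType_eq] at h
        exact h
      · have hb : Integrable (fun t : ℝ => φ (t, y)) := by
          simpa using hint_φ1 y (fun _ => 1) continuous_const
        exact hb.bdd_mul ((measurable_const.mul measurable_realSign).aestronglyMeasurable)
          (c := 2 * |y|) (Eventually.of_forall fun t => by
            rw [Real.norm_eq_abs, abs_mul]
            calc |2 * y| * |Real.sign t| ≤ |2 * y| * 1 :=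
                  mul_le_mul_of_nonneg_left (abs_realSign t) (abs_nonneg _)
              _ = 2 * |y| := by rw [mul_one, abs_mul]; simp)
    have key_b : ∀ y : ℝ, (∫ t, uDiv (y, t) * fderiv ℝ φ (y, t) (0, 1))
        = -∫ t, g2Div (y, t) * φ (y, t) := by
      intro y
      simp only [uDiv, g2Div]
      have hfc : Continuous (fun t : ℝ => t ^ 2 + 2 * t * |y|) :=
        (continuous_pow 2).add ((continuous_const.mul continuous_id).mul continuous_const)
      have hgc : Continuous (fun t : ℝ => 2 * t + 2 * |y|) :=
        (continuous_const.mul continuous_id).add continuous_const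
      refine parts1D (fun t => t ^ 2 + 2 * t * |y|) (fun t => 2 * t + 2 * |y|)
        (fun t => φ (y, t)) (fun t => fderiv ℝ φ (y, t) (0, 1))
        hfc ?_ (hφsl2 y) (hline2 y) (hev2top y) (hev2bot y)
        (hint_d2 y _ hfc) (hint_φ2 y _ hgc)
      intro t _
      have h := (hasDerivAt_pow 2 t).add
        (((hasDerivAt_id t).const_mul (2 : ℝ)).mul_const |y|)
      simpa [Pi.add_def] using h
    have key_c1 : ∀ y : ℝ, (∫ t, (-2 * t) * fderiv ℝ φ (t, y) (1, 0))
        = -∫ t, (-2 : ℝ) * φ (t, y) := by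
      intro y
      have hfc : Continuous (fun t : ℝ => -2 * t) := continuous_const.mul continuous_id
      refine parts1D (fun t => -2 * t) (fun _ => (-2 : ℝ))
        (fun t => φ (t, y)) (fun t => fderiv ℝ φ (t, y) (1, 0))
        hfc ?_ (hφsl1 y) (hline1 y) (hev1top y) (hev1bot y)
        (hint_d1 y _ hfc) (hint_φ1 y _ continuous_const)
      intro t _
      simpa using (hasDerivAt_id t).const_mul (-2 : ℝ)
    have key_c2 : ∀ y : ℝ, (∫ t, (2 * t + 4 * |y|) * fderiv ℝ φ (y, t) (0, 1))
        = -∫ t, (2 : ℝ) * φ (y, t) := by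
      intro y
      have hfc : Continuous (fun t : ℝ => 2 * t + 4 * |y|) :=
        (continuous_const.mul continuous_id).add continuous_const
      refine parts1D (fun t => 2 * t + 4 * |y|) (fun _ => (2 : ℝ))
        (fun t => φ (y, t)) (fun t => fderiv ℝ φ (y, t) (0, 1))
        hfc ?_ (hφsl2 y) (hline2 y) (hev2top y) (hev2bot y)
        (hint_d2 y _ hfc) (hint_φ2 y _ continuous_const)
      intro t _
      simpa using ((hasDerivAt_id t).const_mul (2 : ℝ)).add_const (4 * |y|)
    refine ⟨?_, ?_, ?_⟩
    · -- (a)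
      calc ∫ x : ℝ × ℝ, uDiv x * fderiv ℝ φ x (1, 0)
          = ∫ y, ∫ t, uDiv (t, y) * fderiv ℝ φ (t, y) (1, 0) := fub1 _ hIa1
        _ = ∫ y, -(∫ t, g1Div (t, y) * φ (t, y)) :=
            integral_congr_ae (Eventually.of_forall fun y => key_a y)
        _ = -∫ y, ∫ t, g1Div (t, y) * φ (t, y) := integral_neg _
        _ = -∫ x : ℝ × ℝ, g1Div x * φ x := by rw [← fub1 _ hIa2]
    · -- (b)
      calc ∫ x : ℝ × ℝ, uDiv x * fderiv ℝ φ x (0, 1)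
          = ∫ y, ∫ t, uDiv (y, t) * fderiv ℝ φ (y, t) (0, 1) := fub2 _ hIb1
        _ = ∫ y, -(∫ t, g2Div (y, t) * φ (y, t)) :=
            integral_congr_ae (Eventually.of_forall fun y => key_b y)
        _ = -∫ y, ∫ t, g2Div (y, t) * φ (y, t) := integral_neg _
        _ = -∫ x : ℝ × ℝ, g2Div x * φ x := by rw [← fub2 _ hIb2]
    · -- (c)
      have hN : volume {x : ℝ × ℝ | x.1 = 0} = 0 := by
        have hset : {x : ℝ × ℝ | x.1 = 0} = ({0} : Set ℝ) ×ˢ (univ : Set ℝ) := by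
          ext x
          simp only [mem_setOf_eq, Set.mem_prod, Set.mem_singleton_iff, Set.mem_univ, and_true]
        rw [hset, Measure.volume_eq_prod, Measure.prod_prod]
        simp
      have h0 : ∀ᵐ x : ℝ × ℝ, x.1 ≠ 0 := by
        rw [ae_iff]; simpa using hN
      have hae : ∀ᵐ x : ℝ × ℝ,
          ((1 * g1Div x + a12Div x * g2Div x) * fderiv ℝ φ x (1, 0) +
            (a12Div x * g1Div x + 2 * g2Div x) * fderiv ℝ φ x (0, 1))
          = ((-2 * x.1) * fderiv ℝ φ x (1, 0) +
              (2 * x.2 + 4 * |x.1|) * fderiv ℝ φ x (0, 1)) := by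
        filter_upwards [h0] with x hx
        rcases hx.lt_or_gt with h|h
        · simp only [g1Div, g2Div, a12Div, Real.sign_of_neg h, abs_of_neg h]
          ring
        · simp only [g1Div, g2Div, a12Div, Real.sign_of_pos h, abs_of_pos h]
          ring
      rw [integral_congr_ae hae, integral_add hIc1 hIc2]
      have e1 : ∫ x : ℝ × ℝ, (-2 * x.1) * fderiv ℝ φ x (1, 0)
          = -∫ x : ℝ × ℝ, (-2 : ℝ) * φ x := by
        calc ∫ x : ℝ × ℝ, (-2 * x.1) * fderiv ℝ φ x (1, 0)
            = ∫ y, ∫ t, (-2 * t) * fderiv ℝ φ (t, y) (1, 0) := fub1 _ hIc1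
          _ = ∫ y, -(∫ t, (-2 : ℝ) * φ (t, y)) :=
              integral_congr_ae (Eventually.of_forall fun y => key_c1 y)
          _ = -∫ y, ∫ t, (-2 : ℝ) * φ (t, y) := integral_neg _
          _ = -∫ x : ℝ × ℝ, (-2 : ℝ) * φ x := by rw [← fub1 _ hIφm2]
      have e2 : ∫ x : ℝ × ℝ, (2 * x.2 + 4 * |x.1|) * fderiv ℝ φ x (0, 1)
          = -∫ x : ℝ × ℝ, (2 : ℝ) * φ x := by
        calc ∫ x : ℝ × ℝ, (2 * x.2 + 4 * |x.1|) * fderiv ℝ φ x (0, 1)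
            = ∫ y, ∫ t, (2 * t + 4 * |y|) * fderiv ℝ φ (y, t) (0, 1) := fub2 _ hIc2
          _ = ∫ y, -(∫ t, (2 : ℝ) * φ (y, t)) :=
              integral_congr_ae (Eventually.of_forall fun y => key_c2 y)
          _ = -∫ y, ∫ t, (2 : ℝ) * φ (y, t) := integral_neg _
          _ = -∫ x : ℝ × ℝ, (2 : ℝ) * φ x := by rw [← fub2 _ hIφ2]
      rw [e1, e2]
      have hflip : ∫ x : ℝ × ℝ, (-2 : ℝ) * φ x = -∫ x : ℝ × ℝ, (2 : ℝ) * φ x := by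
        have : (fun x : ℝ × ℝ => (-2 : ℝ) * φ x) = fun x => -((2 : ℝ) * φ x) := by
          funext x; ring
        rw [this, integral_neg]
      rw [hflip]
      ring
  · intro x hx
    unfold uDiv
    nlinarith [mul_nonneg hx.le (abs_nonneg x.1), pow_pos hx 2]
  · simp [uDiv]
  · have h : (fun t : ℝ => uDiv (0, t)) = fun t : ℝ => t ^ 2 := by
      funext t; simp [uDiv]
    rw [h]
    simpa using hasDerivAt_pow 2 (0 : ℝ)

end
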